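/- Let g be a finite-dimensional real Lie algebra, θ a Lie algebra automorphism of g with θ∘θ = id, and B a symmetric bilinear form on g that is invariant (B([x,y],z) + B(y,[x,z]) = 0 for all x,y,z ∈ g) and θ-invariant (B(θx, θy) = B(x,y)), such that B_θ(x,y) := −B(x, θy) is positive definite. Let p = {x ∈ g : θx = −x} and let a ⊆ p be a maximal abelian subspace of p (i.e., [a,a] = 0, and every x ∈ p with [x, z] = 0 for all z ∈ a lies in a). For a linear functional λ on a set g_λ = {x ∈ g : [Z, x] = λ(Z)x for all Z ∈ a}. Let λ be a nonzero linear functional on a with g_λ ≠ 0, and let X, X' ∈ g_λ. If [X, θX'] ∈ p, then X and X' are linearly dependent. -/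

import Mathlib

/-!
For `X ≠ 0`, replace `X'` by its component `Y = X' - t X` that is `B_θ`-orthogonal to `X`.
Then `W = [X, θY]` lies in `p ∩ g_0`, hence in `a` by maximality; invariance of `B` makes
`W` orthogonal to `a`, so `W = 0`. The element `A = [θX, X]` also lies in `a`, and invariance
gives `λ(A) = B(A, A) / B_θ(X, X) > 0`. The Jacobi identity turns `W = 0` into
`[X, [θX, θY]] = λ(A) θY`, and pairing with `Y` yields
`λ(A) B_θ(Y, Y) + B_θ(V, V) = 0` for `V = [θX, θY]`, so `Y = 0` and `X' = t X`.
-/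

section RestrictedRootSpace

variable {R L : Type*} [CommRing R] [LieRing L] [LieAlgebra R L] (a : Submodule R L)

def restrictedRootSpace (lam : a →ₗ[R] R) : Submodule R L where
  carrier := {x | ∀ Z : a, ⁅(Z : L), x⁆ = lam Z • x}
  add_mem' {x y} hx hy Z := by
    simp only [lie_add, smul_add, hx Z, hy Z]
  zero_mem' _ := by simp
  smul_mem' c x hx Z := by
    simp only [lie_smul, hx Z, smul_comm c]

variable {a}

theorem lie_mem_restrictedRootSpace_add {lam mu : a →ₗ[R] R} {x y : L}
    (hx : x ∈ restrictedRootSpace a lam) (hy : y ∈ restrictedRootSpace a mu) :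
    ⁅x, y⁆ ∈ restrictedRootSpace a (lam + mu) := fun Z => by
  rw [leibniz_lie, hx Z, hy Z, smul_lie, lie_smul, LinearMap.add_apply, add_smul, add_comm]

theorem form_lie_apply_of_mem_restrictedRootSpace (B : L →ₗ[R] L →ₗ[R] R)
    (hBinv : ∀ x y z : L, B ⁅x, y⁆ z + B y ⁅x, z⁆ = 0) {lam : a →ₗ[R] R} {x : L}
    (hx : x ∈ restrictedRootSpace a lam) (y : L) (Z : a) :
    B ⁅x, y⁆ Z = lam Z * B y x := by
  have h := hBinv x y Z
  rw [← lie_skew x (Z : L), hx Z, map_neg, map_smul, smul_eq_mul] at h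
  linear_combination h

end RestrictedRootSpace

section CartanInvolution

variable {L : Type*} [LieRing L] [LieAlgebra ℝ L] {θ : L →ₗ⁅ℝ⁆ L} {B : L →ₗ[ℝ] L →ₗ[ℝ] ℝ}
  {a : Submodule ℝ L} {lam : a →ₗ[ℝ] ℝ}

theorem theta_mem_restrictedRootSpace_neg (hθ : ∀ x, θ (θ x) = x)
    (ha_sub_p : ∀ x ∈ a, θ x = -x) {x : L} (hx : x ∈ restrictedRootSpace a lam) :
    θ x ∈ restrictedRootSpace a (-lam) := fun Z => by
  rw [← hθ Z, ← θ.map_lie, ha_sub_p _ Z.2, neg_lie, hx Z, map_neg, map_smul,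
    LinearMap.neg_apply, neg_smul]

theorem theta_lie_theta_self (hθ : ∀ x, θ (θ x) = x) (x : L) :
    θ ⁅θ x, x⁆ = -⁅θ x, x⁆ := by
  rw [θ.map_lie, hθ, ← lie_skew]

theorem mem_of_mem_restrictedRootSpace_zero
    (ha_max : ∀ x : L, θ x = -x → (∀ z ∈ a, ⁅x, z⁆ = 0) → x ∈ a) {w : L}
    (hθw : θ w = -w) (hw : w ∈ restrictedRootSpace a 0) : w ∈ a :=
  ha_max w hθw fun z hz => by rw [← lie_skew, hw ⟨z, hz⟩, LinearMap.zero_apply, zero_smul, neg_zero]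

theorem form_self_pos_of_theta_eq_neg (hBpos : ∀ x : L, x ≠ 0 → 0 < -B x (θ x)) {w : L}
    (hθw : θ w = -w) (hw : w ≠ 0) : 0 < B w w := by
  simpa [hθw] using hBpos w hw

theorem lie_theta_self_mem (hθ : ∀ x, θ (θ x) = x) (ha_sub_p : ∀ x ∈ a, θ x = -x)
    (ha_max : ∀ x : L, θ x = -x → (∀ z ∈ a, ⁅x, z⁆ = 0) → x ∈ a) {X : L}
    (hX : X ∈ restrictedRootSpace a lam) : ⁅θ X, X⁆ ∈ a := by
  have h := lie_mem_restrictedRootSpace_add (theta_mem_restrictedRootSpace_neg hθ ha_sub_p hX) hX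
  rw [neg_add_cancel] at h
  exact mem_of_mem_restrictedRootSpace_zero ha_max (theta_lie_theta_self hθ X) h

theorem lie_theta_eq_zero_of_orthogonal (hθ : ∀ x, θ (θ x) = x)
    (hBsymm : ∀ x y, B x y = B y x) (hBinv : ∀ x y z : L, B ⁅x, y⁆ z + B y ⁅x, z⁆ = 0)
    (hBpos : ∀ x : L, x ≠ 0 → 0 < -B x (θ x)) (ha_sub_p : ∀ x ∈ a, θ x = -x)
    (ha_max : ∀ x : L, θ x = -x → (∀ z ∈ a, ⁅x, z⁆ = 0) → x ∈ a) {X Y : L}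
    (hX : X ∈ restrictedRootSpace a lam) (hY : Y ∈ restrictedRootSpace a lam)
    (hp : θ ⁅X, θ Y⁆ = -⁅X, θ Y⁆) (horth : B X (θ Y) = 0) : ⁅X, θ Y⁆ = 0 := by
  have h0 := lie_mem_restrictedRootSpace_add hX (theta_mem_restrictedRootSpace_neg hθ ha_sub_p hY)
  rw [add_neg_cancel] at h0
  have hWa := mem_of_mem_restrictedRootSpace_zero ha_max hp h0
  have hWW : B ⁅X, θ Y⁆ ⁅X, θ Y⁆ = 0 := by
    rw [form_lie_apply_of_mem_restrictedRootSpace B hBinv hX _ ⟨_, hWa⟩, hBsymm, horth,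
      mul_zero]
  by_contra hW
  exact (form_self_pos_of_theta_eq_neg hBpos hp hW).ne' hWW

theorem lam_lie_theta_self_pos (hθ : ∀ x, θ (θ x) = x)
    (hBinv : ∀ x y z : L, B ⁅x, y⁆ z + B y ⁅x, z⁆ = 0)
    (hBpos : ∀ x : L, x ≠ 0 → 0 < -B x (θ x)) (ha_sub_p : ∀ x ∈ a, θ x = -x)
    (ha_max : ∀ x : L, θ x = -x → (∀ z ∈ a, ⁅x, z⁆ = 0) → x ∈ a) (hlam : lam ≠ 0) {X : L}
    (hX : X ∈ restrictedRootSpace a lam) (hX0 : X ≠ 0) :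
    0 < lam ⟨⁅θ X, X⁆, lie_theta_self_mem hθ ha_sub_p ha_max hX⟩ := by
  set A : a := ⟨⁅θ X, X⁆, lie_theta_self_mem hθ ha_sub_p ha_max hX⟩
  have hα := hBpos X hX0
  have hBA : ∀ Z : a, B A Z = lam Z * -B X (θ X) := fun Z => by
    rw [form_lie_apply_of_mem_restrictedRootSpace B hBinv
      (theta_mem_restrictedRootSpace_neg hθ ha_sub_p hX), LinearMap.neg_apply, neg_mul, mul_neg]
  have hA0 : (A : L) ≠ 0 := fun hA0 => hlam <| LinearMap.ext fun Z => by
    have h := hBA Z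
    rw [hA0, map_zero, LinearMap.zero_apply, eq_comm, mul_eq_zero] at h
    exact h.resolve_right hα.ne'
  have hAA := form_self_pos_of_theta_eq_neg hBpos (theta_lie_theta_self hθ X) hA0
  rw [hBA A] at hAA
  exact pos_of_mul_pos_left hAA hα.le

theorem eq_zero_of_lie_theta_eq_zero (hθ : ∀ x, θ (θ x) = x)
    (hBsymm : ∀ x y, B x y = B y x) (hBinv : ∀ x y z : L, B ⁅x, y⁆ z + B y ⁅x, z⁆ = 0)
    (hBpos : ∀ x : L, x ≠ 0 → 0 < -B x (θ x)) (ha_sub_p : ∀ x ∈ a, θ x = -x) {X Y : L}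
    {A : a} (hA : (A : L) = ⁅θ X, X⁆) (hlamA : 0 < lam A)
    (hY : Y ∈ restrictedRootSpace a lam) (hW : ⁅X, θ Y⁆ = 0) : Y = 0 := by
  have hBnonpos : ∀ v : L, B v (θ v) ≤ 0 := fun v => by
    rcases eq_or_ne v 0 with rfl | hv
    · simp
    · linarith [hBpos v hv]
  set V := ⁅θ X, θ Y⁆
  have hXV : ⁅X, V⁆ = lam A • θ Y := by
    have hAθY := theta_mem_restrictedRootSpace_neg hθ ha_sub_p hY A
    rw [hA] at hAθY
    rw [leibniz_lie, hW, lie_zero, add_zero, ← lie_skew X (θ X), neg_lie, hAθY,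
      LinearMap.neg_apply, neg_smul, neg_neg]
  have hXY : ⁅X, Y⁆ = θ V := by rw [θ.map_lie, hθ, hθ]
  have h := hBinv X V Y
  rw [hXV, hXY, map_smul, LinearMap.smul_apply, smul_eq_mul, hBsymm (θ Y)] at h
  have hYY : B Y (θ Y) = 0 := by
    nlinarith [hBnonpos Y, hBnonpos V, mul_nonpos_of_nonneg_of_nonpos hlamA.le (hBnonpos Y)]
  by_contra hY0
  exact (hBpos Y hY0).ne' (by rw [hYY, neg_zero])

end CartanInvolution

theorem restricted_root_bracket_theta_mem_p_general (L : Type*) [LieRing L] [LieAlgebra ℝ L]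
    (θ : L →ₗ⁅ℝ⁆ L) (hθ : ∀ x, θ (θ x) = x)
    (B : L →ₗ[ℝ] L →ₗ[ℝ] ℝ)
    (hBsymm : ∀ x y, B x y = B y x)
    (hBinv : ∀ x y z : L, B ⁅x, y⁆ z + B y ⁅x, z⁆ = 0)
    (hBpos : ∀ x : L, x ≠ 0 → 0 < -B x (θ x))
    (a : Submodule ℝ L)
    (ha_sub_p : ∀ x ∈ a, θ x = -x)
    (ha_max : ∀ x : L, θ x = -x → (∀ z ∈ a, ⁅x, z⁆ = 0) → x ∈ a)
    (lam : ↥a →ₗ[ℝ] ℝ) (hlam : lam ≠ 0)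
    (X X' : L)
    (hX : ∀ Z : ↥a, ⁅(Z : L), X⁆ = lam Z • X)
    (hX' : ∀ Z : ↥a, ⁅(Z : L), X'⁆ = lam Z • X')
    (h : θ ⁅X, θ X'⁆ = -⁅X, θ X'⁆) :
    ¬ LinearIndependent ℝ ![X, X'] := by
  rcases eq_or_ne X 0 with rfl | hX0
  · exact fun hli => hli.ne_zero 0 rfl
  have hXθX : B X (θ X) ≠ 0 := neg_ne_zero.mp (hBpos X hX0).ne'
  set t := B X (θ X') / B X (θ X)
  set Y := X' - t • X
  have hY : Y ∈ restrictedRootSpace a lam := sub_mem hX' (Submodule.smul_mem _ t hX)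
  have horth : B X (θ Y) = 0 := by
    simp only [Y, map_sub, map_smul, smul_eq_mul, t]
    field_simp [hXθX]
    ring
  have hp : θ ⁅X, θ Y⁆ = -⁅X, θ Y⁆ := by
    simp only [Y, map_sub, map_smul, lie_sub, lie_smul, h, ← lie_skew X (θ X), map_neg,
      theta_lie_theta_self hθ]
    module
  have hW := lie_theta_eq_zero_of_orthogonal hθ hBsymm hBinv hBpos ha_sub_p ha_max hX hY hp horth
  have hY0 := eq_zero_of_lie_theta_eq_zero hθ hBsymm hBinv hBpos ha_sub_p rfl
    (lam_lie_theta_self_pos hθ hBinv hBpos ha_sub_p ha_max hlam hX hX0) hY hW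
  exact fun hli => (LinearIndependent.pair_iff' hX0).mp hli t (sub_eq_zero.mp hY0).symm

/-- **Lemma.** Let `g` be a finite-dimensional real Lie algebra with a Cartan-type involution
`θ` and an invariant, `θ`-invariant symmetric bilinear form `B` such that
`B_θ(x, y) = -B(x, θ y)` is positive definite.  Let `a` be a maximal abelian subspace of the
`(-1)`-eigenspace `p` of `θ`, `λ` a nonzero linear functional on `a` whose restricted root
space `g_λ` is nonzero, and `X, X' ∈ g_λ`.  If `[X, θ X'] ∈ p` then `X` and `X'` are linearly
dependent. -/
theorem restricted_root_bracket_theta_mem_p (L : Type*) [LieRing L] [LieAlgebra ℝ L]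
    [FiniteDimensional ℝ L]
    (θ : L →ₗ⁅ℝ⁆ L) (hθ : ∀ x, θ (θ x) = x)
    (B : L →ₗ[ℝ] L →ₗ[ℝ] ℝ)
    (hBsymm : ∀ x y, B x y = B y x)
    (hBinv : ∀ x y z : L, B ⁅x, y⁆ z + B y ⁅x, z⁆ = 0)
    (hBθ : ∀ x y, B (θ x) (θ y) = B x y)
    (hBpos : ∀ x : L, x ≠ 0 → 0 < -B x (θ x))
    (a : Submodule ℝ L)
    (ha_sub_p : ∀ x ∈ a, θ x = -x)
    (ha_abelian : ∀ x ∈ a, ∀ y ∈ a, ⁅x, y⁆ = 0)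
    (ha_max : ∀ x : L, θ x = -x → (∀ z ∈ a, ⁅x, z⁆ = 0) → x ∈ a)
    (lam : ↥a →ₗ[ℝ] ℝ) (hlam : lam ≠ 0)
    (hroot_ne : ∃ Y : L, Y ≠ 0 ∧ ∀ Z : ↥a, ⁅(Z : L), Y⁆ = lam Z • Y)
    (X X' : L)
    (hX : ∀ Z : ↥a, ⁅(Z : L), X⁆ = lam Z • X)
    (hX' : ∀ Z : ↥a, ⁅(Z : L), X'⁆ = lam Z • X')
    (h : θ ⁅X, θ X'⁆ = -⁅X, θ X'⁆) :
    ¬ LinearIndependent ℝ ![X, X'] :=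
  restricted_root_bracket_theta_mem_p_general L θ hθ B hBsymm hBinv hBpos a ha_sub_p ha_max lam hlam
    X X' hX hX' h
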